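/- arXiv:1008.0305 — 3 statements merged into one kernel-verified Lean document; each statement's English description precedes it below -/
import Mathlib

section
/- Let p be a prime, let A be a commutative ring with pA = 0 equipped with a proper pseudovaluation ν, and let ε > 0. Then the Gauss norm γ_ε is a pseudovaluation on the ring W(A) of p-typical Witt vectors: γ_ε(0) = ∞, γ_ε(1) = 0, γ_ε(ξ ± η) ≥ min(γ_ε(ξ), γ_ε(η)) for all ξ, η ∈ W(A), and γ_ε(ξη) ≥ γ_ε(ξ) + γ_ε(η) whenever γ_ε(ξ) ≠ −∞ and γ_ε(η) ≠ −∞. In particular, the set W^ε(A) of Witt vectors with radius of convergence ε is a subring of W(A). -/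
open scoped Classical

noncomputable section

/-- A pseudovaluation on a commutative ring `A`: a function `ν : A → ℝ ∪ {±∞}` with
`ν 0 = ∞`, `ν 1 = 0`, `ν (a - b) ≥ min (ν a) (ν b)`, and `ν (a*b) ≥ ν a + ν b`
whenever `ν a ≠ -∞` and `ν b ≠ -∞`. -/
structure IsPseudovaluation {A : Type*} [CommRing A] (ν : A → EReal) : Prop where
  map_zero : ν 0 = ⊤
  map_one : ν 1 = 0
  min_le_sub : ∀ a b : A, min (ν a) (ν b) ≤ ν (a - b)
  add_le_mul : ∀ a b : A, ν a ≠ ⊥ → ν b ≠ ⊥ → ν a + ν b ≤ ν (a * b)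

/-- A proper pseudovaluation never takes the value `-∞`. -/
def IsProperPV {A : Type*} [CommRing A] (ν : A → EReal) : Prop :=
  IsPseudovaluation ν ∧ ∀ a : A, ν a ≠ ⊥

/-- A negative pseudovaluation is proper and satisfies `ν a ≤ 0` for `a ≠ 0`. -/
def IsNegativePV {A : Type*} [CommRing A] (ν : A → EReal) : Prop :=
  IsPseudovaluation ν ∧ (∀ a : A, ν a ≠ ⊥) ∧ ∀ a : A, a ≠ 0 → ν a ≤ 0

/-- `f` is localizing with respect to `ν` if there are `C > 0`, `D ≥ 0` with
`ν (fⁿ x) ≤ C · ν x + n D` for all `n` and `x`. -/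
def IsLocalizing {A : Type*} [CommRing A] (ν : A → EReal) (f : A) : Prop :=
  ∃ C D : ℝ, 0 < C ∧ 0 ≤ D ∧ ∀ (n : ℕ) (x : A),
    ν (f ^ n * x) ≤ (C : EReal) * ν x + (((n : ℝ) * D : ℝ) : EReal)

/-- Two functions `A → ℝ ∪ {±∞}` are linearly equivalent if they dominate each other
up to positive multiplicative and nonnegative additive constants. -/
def LinearlyEquivalent {A : Type*} (ν₁ ν₂ : A → EReal) : Prop :=
  ∃ c₁ c₂ d₁ d₂ : ℝ, 0 < c₁ ∧ 0 < c₂ ∧ 0 ≤ d₁ ∧ 0 ≤ d₂ ∧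
    (∀ a : A, (c₂ : EReal) * ν₂ a - (d₂ : EReal) ≤ ν₁ a) ∧
    (∀ a : A, (c₁ : EReal) * ν₁ a - (d₁ : EReal) ≤ ν₂ a)

/-- The weighted degree pseudovaluation on a multivariate polynomial ring:
`ν (Σ_k c_k T^k) = inf_k { μ(c_k) - Σ_i k_i d_i }`. -/
def weightedDegPV {R : Type*} [CommRing R] (μ : R → EReal) {m : ℕ} (d : Fin m → ℝ)
    (f : MvPolynomial (Fin m) R) : EReal :=
  ⨅ k : Fin m →₀ ℕ, (μ (MvPolynomial.coeff k f) - ((∑ i, (k i : ℝ) * d i : ℝ) : EReal))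

/-- A pseudovaluation `τ` on an `R`-algebra `B` is admissible (relative to `μ` on `R`)
if it is the quotient of a weighted degree pseudovaluation under some surjection
from a polynomial ring. -/
def IsAdmissiblePV {R B : Type*} [CommRing R] [CommRing B] [Algebra R B]
    (μ : R → EReal) (τ : B → EReal) : Prop :=
  ∃ (m : ℕ) (π : MvPolynomial (Fin m) R →ₐ[R] B) (d : Fin m → ℝ),
    Function.Surjective π ∧ (∀ i, 0 < d i) ∧
    ∀ b : B, τ b = ⨆ (f : MvPolynomial (Fin m) R) (_ : π f = b), weightedDegPV μ d f

/-- The pseudovaluation `μ (Σ_i a_i X^i) = min_i { ν(a_i) - i·d }` on `A[X]`. -/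
def polyPV {A : Type*} [CommRing A] (ν : A → EReal) (d : ℝ) (g : Polynomial A) : EReal :=
  ⨅ i : ℕ, (ν (g.coeff i) - (((i : ℝ) * d : ℝ) : EReal))

/-- The induced pseudovaluation on the localization `A_f`: the quotient of `polyPV ν d`
under the map `A[X] → A_f`, `X ↦ f⁻¹`. -/
def locPV {A : Type*} [CommRing A] (ν : A → EReal) (f : A) (d : ℝ)
    (z : Localization.Away f) : EReal :=
  ⨆ (g : Polynomial A)
    (_ : Polynomial.aeval (IsLocalization.Away.invSelf (S := Localization.Away f) f) g = z),
    polyPV ν d g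

/-- The Gauss norm `γ_ε(α) = inf_i { i + ε p^{-i} ν(a_i) }` of a Witt vector. -/
def gaussNorm (p : ℕ) {A : Type*} [CommRing A] (ν : A → EReal) (ε : ℝ)
    (α : WittVector p A) : EReal :=
  ⨅ i : ℕ, ((i : EReal) + ((ε * (p : ℝ) ^ (-(i : ℤ)) : ℝ) : EReal) * ν (α.coeff i))

/-- A Witt vector is overconvergent if `γ_ε(α) ≠ -∞` for some `ε > 0`. -/
def IsOverconvergent (p : ℕ) {A : Type*} [CommRing A] (ν : A → EReal)
    (α : WittVector p A) : Prop :=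
  ∃ ε : ℝ, 0 < ε ∧ gaussNorm p ν ε α ≠ ⊥

/-- The trivial valuation on an integral domain: `ν 0 = ∞` and `ν a = 0` for `a ≠ 0`. -/
def trivialPV (K : Type*) [Zero K] : K → EReal :=
  fun a => if a = 0 then (⊤ : EReal) else 0

/-!
For real `γ`, the inequality `γ ≤ γ_ε(α)` says exactly that `ν(aᵢ) ≥ pⁱ (γ - i) / ε` for every
`i`. The `n`-th coefficient of `ξ ± η` is an integral polynomial in the coefficients of `ξ` and
`η` which is weighted homogeneous of degree `pⁿ` when the `i`-th coefficients get weight `pⁱ`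
(inherited from the Witt polynomials through the recursion defining the structure polynomials),
and only involves indices `i ≤ n`; on each monomial the bounds then combine convexly to the bound
at index `n`. For the product, the `n`-th coefficient only depends on the truncations
`∑_{i ≤ n} Vⁱ[aᵢ]`, and since `pA = 0` we have `Vⁱ[a] · Vʲ[b] = Vⁱ⁺ʲ[a^{pʲ} b^{pⁱ}]`, along which
the bounds add exactly.
-/

open MvPolynomial

namespace IsPseudovaluation

variable {A : Type*} [CommRing A] {ν : A → EReal}

lemma le_neg (hν : IsPseudovaluation ν) (a : A) : ν a ≤ ν (-a) := by
  simpa [hν.map_zero] using hν.min_le_sub 0 a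

lemma min_le_add (hν : IsPseudovaluation ν) (a b : A) : min (ν a) (ν b) ≤ ν (a + b) := by
  simpa using (min_le_min_left _ (hν.le_neg b)).trans (hν.min_le_sub a (-b))

lemma le_sum (hν : IsPseudovaluation ν) {ι : Type*} {s : Finset ι} {f : ι → A} {c : EReal}
    (h : ∀ i ∈ s, c ≤ ν (f i)) : c ≤ ν (∑ i ∈ s, f i) := by
  classical
  induction s using Finset.induction with
  | empty => simp [hν.map_zero]
  | insert a s ha ih =>
    rw [Finset.sum_insert ha]
    exact (le_min (h a (s.mem_insert_self a))
      (ih fun i hi => h i (Finset.mem_insert_of_mem hi))).trans (hν.min_le_add _ _)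

lemma natCast_nonneg (hν : IsPseudovaluation ν) (n : ℕ) : 0 ≤ ν (n : A) := by
  induction n with
  | zero => simp [hν.map_zero]
  | succ n ih =>
    rw [Nat.cast_succ]
    exact (le_min ih hν.map_one.ge).trans (hν.min_le_add _ _)

lemma intCast_nonneg (hν : IsPseudovaluation ν) (m : ℤ) : 0 ≤ ν (m : A) := by
  obtain ⟨n, rfl | rfl⟩ := m.eq_nat_or_neg
  · exact_mod_cast hν.natCast_nonneg n
  · simpa using (hν.natCast_nonneg n).trans (hν.le_neg _)

lemma le_intCast_mul (hν : IsPseudovaluation ν) (hproper : ∀ a : A, ν a ≠ ⊥) (m : ℤ) (a : A) :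
    ν a ≤ ν (m * a) :=
  calc ν a ≤ ν m + ν a := le_add_of_nonneg_left (hν.intCast_nonneg m)
    _ ≤ ν (m * a) := hν.add_le_mul _ _ (hproper _) (hproper _)

lemma coe_add_le_mul (hν : IsPseudovaluation ν) (hproper : ∀ a : A, ν a ≠ ⊥) {a b : A} {s t : ℝ}
    (ha : s ≤ ν a) (hb : t ≤ ν b) :
    ((s + t : ℝ) : EReal) ≤ ν (a * b) :=
  (add_le_add ha hb).trans (hν.add_le_mul _ _ (hproper _) (hproper _))

lemma coe_mul_le_pow (hν : IsPseudovaluation ν) (hproper : ∀ a : A, ν a ≠ ⊥) {a : A} {s : ℝ}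
    (ha : s ≤ ν a) (k : ℕ) :
    ((k * s : ℝ) : EReal) ≤ ν (a ^ k) := by
  induction k with
  | zero => simp [hν.map_one]
  | succ k ih => simpa [pow_succ, add_mul] using coe_add_le_mul hν hproper ih ha

lemma coe_sum_le_prod (hν : IsPseudovaluation ν) (hproper : ∀ a : A, ν a ≠ ⊥) {ι : Type*}
    (s : Finset ι) {f : ι → A} {t : ι → ℝ}
    (hf : ∀ i, t i ≤ ν (f i)) (d : ι → ℕ) :
    ((∑ i ∈ s, d i * t i : ℝ) : EReal) ≤ ν (∏ i ∈ s, f i ^ d i) := by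
  classical
  induction s using Finset.induction with
  | empty => simp [hν.map_one]
  | insert a s ha ih =>
    rw [Finset.sum_insert ha, Finset.prod_insert ha]
    exact coe_add_le_mul hν hproper (coe_mul_le_pow hν hproper (hf a) _) ih

lemma coe_le_aeval (hν : IsPseudovaluation ν) (hproper : ∀ a : A, ν a ≠ ⊥) {σ : Type*}
    (φ : MvPolynomial σ ℤ) {g : σ → A} {t : σ → ℝ} {T : ℝ}
    (hg : ∀ v, t v ≤ ν (g v)) (hT : ∀ d ∈ φ.support, T ≤ ∑ v ∈ d.support, d v * t v) :
    (T : EReal) ≤ ν (aeval g φ) := by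
  rw [aeval_def, eval₂_eq]
  refine hν.le_sum fun d hd => ?_
  refine (EReal.coe_le_coe_iff.2 (hT d hd)).trans ?_
  refine (coe_sum_le_prod hν hproper _ hg _).trans ?_
  simpa using le_intCast_mul hν hproper (coeff d φ) _

end IsPseudovaluation

namespace MvPolynomial.IsWeightedHomogeneous

lemma bind₁ {σ τ R : Type*} [CommRing R] {w : σ → ℕ} {w' : τ → ℕ}
    {φ : MvPolynomial σ R} {m : ℕ} {g : σ → MvPolynomial τ R}
    (hφ : IsWeightedHomogeneous w φ m) (hg : ∀ i, IsWeightedHomogeneous w' (g i) (w i)) :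
    IsWeightedHomogeneous w' (bind₁ g φ) m := by
  rw [MvPolynomial.bind₁, aeval_def, algebraMap_eq, eval₂_eq]
  refine IsWeightedHomogeneous.sum _ _ _ fun d hd => ?_
  have hprod := IsWeightedHomogeneous.prod d.support (fun i => g i ^ d i) (fun i => d i * w i)
    fun i _ => (hg i).pow (d i)
  convert (isWeightedHomogeneous_C w' (coeff d φ)).mul hprod using 1
  rw [zero_add, ← hφ (mem_support_iff.mp hd), Finsupp.weight_apply, Finsupp.sum]
  simp

lemma rename {σ τ R : Type*} [CommRing R] {w : τ → ℕ} {f : σ → τ} {φ : MvPolynomial σ R}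
    {m : ℕ} (hφ : IsWeightedHomogeneous (w ∘ f) φ m) :
    IsWeightedHomogeneous w (rename f φ) m := by
  rw [rename_eq_aeval]
  exact hφ.bind₁ fun i => isWeightedHomogeneous_X R w (f i)

lemma of_map_injective {σ R S : Type*} [CommSemiring R] [CommSemiring S] {w : σ → ℕ}
    {f : R →+* S} (hf : Function.Injective f) {φ : MvPolynomial σ R} {m : ℕ}
    (hφ : IsWeightedHomogeneous w (map f φ) m) : IsWeightedHomogeneous w φ m :=
  fun d hd => hφ <| by rwa [coeff_map, ← map_zero f, hf.ne_iff]

lemma map {σ R S : Type*} [CommSemiring R] [CommSemiring S] {w : σ → ℕ} (f : R →+* S)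
    {φ : MvPolynomial σ R} {m : ℕ} (hφ : IsWeightedHomogeneous w φ m) :
    IsWeightedHomogeneous w (map f φ) m :=
  fun d hd => hφ fun h => hd <| by rw [coeff_map, h, map_zero]

end MvPolynomial.IsWeightedHomogeneous

namespace WittVector

variable (p : ℕ)

lemma isWeightedHomogeneous_wittPolynomial (R : Type*) [CommRing R] (n : ℕ) :
    IsWeightedHomogeneous (p ^ ·) (wittPolynomial p R n) (p ^ n) := by
  refine IsWeightedHomogeneous.sum _ _ _ fun i hi => isWeightedHomogeneous_monomial _ _ _ ?_
  rw [Finsupp.weight_apply, Finsupp.sum_single_index (by simp), smul_eq_mul, ← pow_add,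
    Nat.sub_add_cancel (Finset.mem_range_succ_iff.mp hi)]

lemma isWeightedHomogeneous_xInTermsOfW [Fact p.Prime] (n : ℕ) :
    IsWeightedHomogeneous (p ^ ·) (xInTermsOfW p ℚ n) (p ^ n) := by
  induction n using Nat.strong_induction_on with
  | _ n ih =>
    rw [xInTermsOfW_eq, mul_comm]
    refine ((isWeightedHomogeneous_X ℚ _ n).sub
      (IsWeightedHomogeneous.sum _ _ _ fun i hi => ?_)).C_mul _
    have hi := Finset.mem_range.mp hi
    convert ((ih i hi).pow (p ^ (n - i))).C_mul ((p : ℚ) ^ i) using 1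
    rw [smul_eq_mul, ← pow_add, Nat.sub_add_cancel hi.le]

lemma isWeightedHomogeneous_wittStructureInt [Fact p.Prime] {idx : Type*}
    (Φ : MvPolynomial idx ℤ)
    (hΦ : ∀ k, IsWeightedHomogeneous (fun _ => p ^ k) Φ (p ^ k)) (n : ℕ) :
    IsWeightedHomogeneous (fun v : idx × ℕ => p ^ v.2) (wittStructureInt p Φ n) (p ^ n) := by
  refine IsWeightedHomogeneous.of_map_injective (f := Int.castRingHom ℚ) Int.cast_injective ?_
  rw [map_wittStructureInt, wittStructureRat]
  refine (isWeightedHomogeneous_xInTermsOfW p n).bind₁ fun k => ((hΦ k).map _).bind₁ fun i => ?_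
  exact IsWeightedHomogeneous.rename (f := Prod.mk i) (isWeightedHomogeneous_wittPolynomial p ℚ k)

variable {p} [Fact p.Prime] {A : Type*} [CommRing A]

lemma coeff_iterate_verschiebung_teichmuller (c : A) (m k : ℕ) :
    (verschiebung^[m] (teichmuller p c)).coeff k = if k = m then c else 0 := by
  rcases lt_trichotomy k m with h | rfl | h
  · rw [if_neg h.ne, iterate_verschiebung_coeff_eq_zero _ h]
  · simpa using iterate_verschiebung_coeff (teichmuller p c) k 0
  · obtain ⟨j, rfl⟩ := Nat.exists_eq_add_of_lt h
    rw [if_neg h.ne', add_assoc, add_comm, iterate_verschiebung_coeff,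
      teichmuller_coeff_pos p c _ j.succ_pos]

lemma init_eq_sum_iterate_verschiebung_teichmuller (x : WittVector p A) (n : ℕ) :
    init n x = ∑ i ∈ Finset.range n, verschiebung^[i] (teichmuller p (x.coeff i)) := by
  ext k
  rw [sum_coeff_eq_coeff_sum]
  · simp [init, select, coeff_iterate_verschiebung_teichmuller]
  · refine fun k => ⟨fun a b => Subtype.ext ?_⟩
    have ha := a.2.2
    have hb := b.2.2
    simp only [coeff_iterate_verschiebung_teichmuller, ne_eq, ite_eq_right_iff,
      not_forall] at ha hb
    exact ha.1.symm.trans hb.1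

lemma coeff_mul_eq_coeff_init_mul_init (x y : WittVector p A) (n : ℕ) :
    (x * y).coeff n = (init (n + 1) x * init (n + 1) y).coeff n := by
  have coeff_init_succ (z : WittVector p A) : (init (n + 1) z).coeff n = z.coeff n := by
    simp [init, select]
  rw [← coeff_init_succ (x * y), init_mul, coeff_init_succ]

lemma iterate_frobenius_teichmuller [CharP A p] (c : A) (j : ℕ) :
    frobenius^[j] (teichmuller p c) = teichmuller p (c ^ p ^ j) := by
  ext (_ | k)
  · simp [iterate_frobenius_coeff, -map_pow]
  · rw [iterate_frobenius_coeff, teichmuller_coeff_pos p _ _ k.succ_pos,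
      teichmuller_coeff_pos p _ _ k.succ_pos,
      zero_pow (pow_ne_zero _ (Fact.out : p.Prime).ne_zero)]

end WittVector

/-- `(γ : EReal) ≤ i + ε p^{-i} x` is equivalent to `gaussBound p ε γ i ≤ x`
(`coe_le_gaussNorm_term_iff`). -/
def gaussBound (p : ℕ) (ε γ : ℝ) (i : ℕ) : ℝ := (p : ℝ) ^ i * (γ - i) / ε

lemma gaussBound_add (p : ℕ) (ε γ₁ γ₂ : ℝ) (i j : ℕ) :
    gaussBound p ε (γ₁ + γ₂) (i + j) =
      (p ^ j : ℕ) * gaussBound p ε γ₁ i + (p ^ i : ℕ) * gaussBound p ε γ₂ j := by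
  simp only [gaussBound]
  push_cast
  ring

/-- With `λᵥ = dᵥ p^{iᵥ} / pⁿ`, which sum to `1`, the right side is `pⁿ ∑ λᵥ (γ - iᵥ) / ε`. -/
lemma gaussBound_le_sum {p : ℕ} {ε : ℝ} (hε : 0 < ε) (γ : ℝ) {σ : Type*} {d : σ →₀ ℕ}
    {i : σ → ℕ} {n : ℕ} (hweight : ∑ v ∈ d.support, d v * p ^ i v = p ^ n)
    (hi : ∀ v ∈ d.support, i v ≤ n) :
    gaussBound p ε γ n ≤ ∑ v ∈ d.support, d v * gaussBound p ε γ (i v) := by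
  have hweight' : ∑ v ∈ d.support, (d v : ℝ) * (p : ℝ) ^ i v = (p : ℝ) ^ n := by
    exact_mod_cast hweight
  calc gaussBound p ε γ n = ∑ v ∈ d.support, d v * ((p : ℝ) ^ i v * (γ - n) / ε) := by
        simp only [gaussBound, ← hweight', Finset.sum_div, Finset.sum_mul]
        exact Finset.sum_congr rfl fun v _ => by ring
    _ ≤ ∑ v ∈ d.support, d v * gaussBound p ε γ (i v) := by
        refine Finset.sum_le_sum fun v hv => ?_
        unfold gaussBound
        gcongr
        exact_mod_cast hi v hv

section GaussNorm

open WittVector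

variable {p : ℕ} [Fact p.Prime] {A : Type*} [CommRing A] {ν : A → EReal} {ε : ℝ}

lemma coe_le_gaussNorm_term_iff (hε : 0 < ε) (γ : ℝ) (i : ℕ) (x : EReal) :
    (γ : EReal) ≤ i + ((ε * (p : ℝ) ^ (-(i : ℤ)) : ℝ) : EReal) * x ↔
      (gaussBound p ε γ i : EReal) ≤ x := by
  have hp : (0 : ℝ) < p := Nat.cast_pos.2 (Fact.out : p.Prime).pos
  have hw : 0 < ε * (p : ℝ) ^ (-(i : ℤ)) := by positivity
  induction x using EReal.rec with
  | bot => simp only [EReal.coe_mul_bot_of_pos hw, EReal.add_bot, le_bot_iff, EReal.coe_ne_bot]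
  | top =>
    simp only [EReal.coe_mul_top_of_pos hw, EReal.add_top_of_ne_bot (EReal.natCast_ne_bot i),
      le_top]
  | coe x =>
    rw [← EReal.coe_coe_eq_natCast, ← EReal.coe_mul, ← EReal.coe_add, EReal.coe_le_coe_iff,
      EReal.coe_le_coe_iff, gaussBound, div_le_iff₀ hε, zpow_neg, zpow_natCast,
      ← sub_le_iff_le_add', ← le_div_iff₀' (pow_pos hp i)]
    field_simp

lemma coe_le_gaussNorm_iff (hε : 0 < ε) (γ : ℝ) (α : WittVector p A) :
    (γ : EReal) ≤ gaussNorm p ν ε α ↔ ∀ i, (gaussBound p ε γ i : EReal) ≤ ν (α.coeff i) := by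
  simp only [gaussNorm, le_iInf_iff, coe_le_gaussNorm_term_iff hε]

lemma gaussNorm_zero (hν : IsPseudovaluation ν) (hε : 0 < ε) :
    gaussNorm p ν ε (0 : WittVector p A) = ⊤ :=
  eq_top_iff.2 <| EReal.ge_of_forall_gt_iff_ge.1 fun γ _ => by
    simp [coe_le_gaussNorm_iff hε, hν.map_zero]

lemma gaussNorm_one (hν : IsPseudovaluation ν) (hε : 0 < ε) :
    gaussNorm p ν ε (1 : WittVector p A) = 0 := by
  refine le_antisymm ((iInf_le _ 0).trans (by simp [hν.map_one])) ?_
  rw [← EReal.coe_zero, coe_le_gaussNorm_iff hε]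
  rintro (_ | i)
  · simp [gaussBound, hν.map_one]
  · simp [one_coeff_eq_of_pos, hν.map_zero]

lemma gaussBound_le_aeval_wittStructureInt (hν : IsPseudovaluation ν)
    (hproper : ∀ a : A, ν a ≠ ⊥) (hε : 0 < ε) {idx : Type*} [Fintype idx]
    (Φ : MvPolynomial idx ℤ) (hΦ : ∀ k, IsWeightedHomogeneous (fun _ => p ^ k) Φ (p ^ k))
    {γ : ℝ} {g : idx × ℕ → A} (hg : ∀ v, gaussBound p ε γ v.2 ≤ ν (g v)) (n : ℕ) :
    (gaussBound p ε γ n : EReal) ≤ ν (aeval g (wittStructureInt p Φ n)) := by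
  refine hν.coe_le_aeval hproper _ hg fun d hd => gaussBound_le_sum hε γ ?_ fun v hv => ?_
  · have := isWeightedHomogeneous_wittStructureInt p Φ hΦ n (mem_support_iff.1 hd)
    simpa [Finsupp.weight_apply, Finsupp.sum] using this
  · have := wittStructureInt_vars p Φ n ((mem_vars_iff_mem_support v).2 ⟨d, hd, hv⟩)
    simp only [Finset.mem_product, Finset.mem_range] at this
    omega

lemma min_gaussNorm_le_of_coeff_eq_peval (hν : IsPseudovaluation ν)
    (hproper : ∀ a : A, ν a ≠ ⊥) (hε : 0 < ε) (Φ : MvPolynomial (Fin 2) ℤ)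
    (hΦ : ∀ k, IsWeightedHomogeneous (fun _ => p ^ k) Φ (p ^ k))
    {ξ η ζ : WittVector p A}
    (hζ : ∀ n, ζ.coeff n = peval (wittStructureInt p Φ n) ![ξ.coeff, η.coeff]) :
    min (gaussNorm p ν ε ξ) (gaussNorm p ν ε η) ≤ gaussNorm p ν ε ζ := by
  refine EReal.ge_of_forall_gt_iff_ge.1 fun γ hγ => ?_
  rw [lt_min_iff] at hγ
  have hξ := (coe_le_gaussNorm_iff hε γ ξ).1 hγ.1.le
  have hη := (coe_le_gaussNorm_iff hε γ η).1 hγ.2.le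
  rw [coe_le_gaussNorm_iff hε]
  intro n
  rw [hζ]
  refine gaussBound_le_aeval_wittStructureInt hν hproper hε Φ hΦ (fun ⟨b, i⟩ => ?_) n
  fin_cases b
  exacts [hξ i, hη i]

lemma min_gaussNorm_le_add (hν : IsPseudovaluation ν) (hproper : ∀ a : A, ν a ≠ ⊥)
    (hε : 0 < ε) (ξ η : WittVector p A) :
    min (gaussNorm p ν ε ξ) (gaussNorm p ν ε η) ≤ gaussNorm p ν ε (ξ + η) :=
  min_gaussNorm_le_of_coeff_eq_peval hν hproper hε _
    (fun _ => (isWeightedHomogeneous_X ℤ _ 0).add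
      (isWeightedHomogeneous_X ℤ _ 1))
    (add_coeff ξ η)

lemma min_gaussNorm_le_sub (hν : IsPseudovaluation ν) (hproper : ∀ a : A, ν a ≠ ⊥)
    (hε : 0 < ε) (ξ η : WittVector p A) :
    min (gaussNorm p ν ε ξ) (gaussNorm p ν ε η) ≤ gaussNorm p ν ε (ξ - η) :=
  min_gaussNorm_le_of_coeff_eq_peval hν hproper hε _
    (fun _ => (isWeightedHomogeneous_X ℤ _ 0).sub
      (isWeightedHomogeneous_X ℤ _ 1))
    (sub_coeff ξ η)

lemma le_gaussNorm_sum (hν : IsPseudovaluation ν) (hproper : ∀ a : A, ν a ≠ ⊥) (hε : 0 < ε)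
    {ι : Type*} {s : Finset ι} {f : ι → WittVector p A} {c : EReal}
    (h : ∀ i ∈ s, c ≤ gaussNorm p ν ε (f i)) : c ≤ gaussNorm p ν ε (∑ i ∈ s, f i) := by
  classical
  induction s using Finset.induction with
  | empty => simp [gaussNorm_zero hν hε]
  | insert a s ha ih =>
    rw [Finset.sum_insert ha]
    exact (le_min (h a (s.mem_insert_self a)) (ih fun i hi => h i (Finset.mem_insert_of_mem hi))
      ).trans (min_gaussNorm_le_add hν hproper hε _ _)

lemma coe_le_gaussNorm_iterate_verschiebung_teichmuller (hν : IsPseudovaluation ν) (hε : 0 < ε)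
    {γ : ℝ} {m : ℕ} {c : A} (hc : gaussBound p ε γ m ≤ ν c) :
    (γ : EReal) ≤ gaussNorm p ν ε (verschiebung^[m] (teichmuller p c)) := by
  rw [coe_le_gaussNorm_iff hε]
  intro k
  rw [coeff_iterate_verschiebung_teichmuller]
  split_ifs with hk
  · exact hk ▸ hc
  · simp [hν.map_zero]

lemma coe_add_le_gaussNorm_mul [CharP A p] (hν : IsPseudovaluation ν)
    (hproper : ∀ a : A, ν a ≠ ⊥) (hε : 0 < ε) {ξ η : WittVector p A} {γ₁ γ₂ : ℝ}
    (hξ : (γ₁ : EReal) ≤ gaussNorm p ν ε ξ) (hη : (γ₂ : EReal) ≤ gaussNorm p ν ε η) :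
    ((γ₁ + γ₂ : ℝ) : EReal) ≤ gaussNorm p ν ε (ξ * η) := by
  rw [coe_le_gaussNorm_iff hε] at hξ hη ⊢
  intro n
  rw [coeff_mul_eq_coeff_init_mul_init]
  refine (coe_le_gaussNorm_iff hε _ _).1 ?_ n
  rw [init_eq_sum_iterate_verschiebung_teichmuller,
    init_eq_sum_iterate_verschiebung_teichmuller, Finset.sum_mul_sum]
  refine le_gaussNorm_sum hν hproper hε fun i _ => le_gaussNorm_sum hν hproper hε fun j _ => ?_
  rw [iterate_verschiebung_mul, iterate_frobenius_teichmuller,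
    iterate_frobenius_teichmuller, ← map_mul]
  refine coe_le_gaussNorm_iterate_verschiebung_teichmuller hν hε ?_
  rw [gaussBound_add]
  exact hν.coe_add_le_mul hproper (hν.coe_mul_le_pow hproper (hξ i) _)
    (hν.coe_mul_le_pow hproper (hη j) _)

lemma gaussNorm_add_le_mul [CharP A p] (hν : IsPseudovaluation ν)
    (hproper : ∀ a : A, ν a ≠ ⊥) (hε : 0 < ε) (ξ η : WittVector p A) :
    gaussNorm p ν ε ξ + gaussNorm p ν ε η ≤ gaussNorm p ν ε (ξ * η) := by
  refine EReal.add_le_of_forall_lt fun a ha b hb => ?_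
  induction a using EReal.rec with
  | bot => simp
  | top => exact absurd ha not_top_lt
  | coe γ₁ =>
    induction b using EReal.rec with
    | bot => simp
    | top => exact absurd hb not_top_lt
    | coe γ₂ => exact_mod_cast coe_add_le_gaussNorm_mul hν hproper hε ha.le hb.le

/-- `W^ε(A)`. -/
def gaussNormSubring [CharP A p] (hν : IsPseudovaluation ν) (hproper : ∀ a : A, ν a ≠ ⊥)
    (hε : 0 < ε) : Subring (WittVector p A) where
  carrier := {α | gaussNorm p ν ε α ≠ ⊥}
  zero_mem' := by simp [gaussNorm_zero hν hε]
  one_mem' := by simp [gaussNorm_one hν hε]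
  add_mem' {ξ η} hξ hη := ne_bot_of_le_ne_bot (lt_min (bot_lt_iff_ne_bot.2 hξ)
    (bot_lt_iff_ne_bot.2 hη)).ne' (min_gaussNorm_le_add hν hproper hε ξ η)
  neg_mem' {ξ} hξ := by
    have h := min_gaussNorm_le_sub hν hproper hε 0 ξ
    rw [zero_sub, gaussNorm_zero hν hε, min_eq_right le_top] at h
    exact ne_bot_of_le_ne_bot hξ h
  mul_mem' {ξ η} hξ hη := ne_bot_of_le_ne_bot (EReal.add_ne_bot_iff.2 ⟨hξ, hη⟩)
    (gaussNorm_add_le_mul hν hproper hε ξ η)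

end GaussNorm

/-- For a prime `p`, a commutative ring `A` with `pA = 0` with a proper
pseudovaluation `ν`, and `ε > 0`, the Gauss norm `γ_ε` is a pseudovaluation on `W(A)`;
in particular the Witt vectors with radius of convergence `ε` form a subring. -/
theorem statement0 (p : ℕ) [Fact p.Prime] (A : Type*) [CommRing A]
    (hpA : ((p : ℕ) : A) = 0)
    (ν : A → EReal) (hν : IsPseudovaluation ν) (hproper : ∀ a : A, ν a ≠ ⊥)
    (ε : ℝ) (hε : 0 < ε) :
    gaussNorm p ν ε (0 : WittVector p A) = ⊤ ∧
    gaussNorm p ν ε (1 : WittVector p A) = 0 ∧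
    (∀ ξ η : WittVector p A,
      min (gaussNorm p ν ε ξ) (gaussNorm p ν ε η) ≤ gaussNorm p ν ε (ξ + η)) ∧
    (∀ ξ η : WittVector p A,
      min (gaussNorm p ν ε ξ) (gaussNorm p ν ε η) ≤ gaussNorm p ν ε (ξ - η)) ∧
    (∀ ξ η : WittVector p A, gaussNorm p ν ε ξ ≠ ⊥ → gaussNorm p ν ε η ≠ ⊥ →
      gaussNorm p ν ε ξ + gaussNorm p ν ε η ≤ gaussNorm p ν ε (ξ * η)) ∧
    ∃ S : Subring (WittVector p A), ∀ α : WittVector p A,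
      α ∈ S ↔ gaussNorm p ν ε α ≠ ⊥ := by
  have : Nontrivial A := nontrivial_of_ne 1 0 fun h => by simpa [h, hν.map_zero] using hν.map_one
  have : CharP A p := (CharP.charP_iff_prime_eq_zero Fact.out).2 hpA
  exact ⟨gaussNorm_zero hν hε, gaussNorm_one hν hε, min_gaussNorm_le_add hν hproper hε,
    min_gaussNorm_le_sub hν hproper hε, fun ξ η _ _ => gaussNorm_add_le_mul hν hproper hε ξ η,
    gaussNormSubring hν hproper hε, fun _ => Iff.rfl⟩
end
end

section
/- Let (A, ν) be a commutative ring with a negative pseudovaluation and let f, g ∈ A be non-zero divisors. Then the product fg is localizing with respect to ν if and only if both f and g are localizing with respect to ν. -/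
open scoped Classical

noncomputable section

/-!
Superadditivity of `ν` on products gives `ν (gⁿ) ≥ n ν(g)`, so the bound for `ν ((fg)ⁿ x)`
becomes one for `ν (fⁿ x)` after shifting `D` by `ν g`; this shift is finite because `fg`
being localizing forces `ν (fg) ≤ D`, hence `ν g < ∞`. Conversely, the bounds for `f` and `g`
compose into one for `fg`.
-/

namespace IsProperPV

variable {A : Type*} [CommRing A] {ν : A → EReal}

theorem nsmul_le_map_pow (hν : IsProperPV ν) (a : A) (n : ℕ) : n • ν a ≤ ν (a ^ n) := by
  induction n with
  | zero => simp [hν.1.map_one]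
  | succ n ih =>
    calc (n + 1) • ν a = n • ν a + ν a := succ_nsmul _ _
      _ ≤ ν (a ^ n) + ν a := add_le_add_left ih _
      _ ≤ ν (a ^ (n + 1)) := pow_succ a n ▸ hν.1.add_le_mul _ _ (hν.2 _) (hν.2 _)

theorem map_ne_top_of_mul (hν : IsProperPV ν) {a b : A} (hab : ν (a * b) ≠ ⊤) : ν b ≠ ⊤ := by
  intro hb
  have h := hν.1.add_le_mul a b (hν.2 a) (hν.2 b)
  rw [hb, EReal.add_top_of_ne_bot (hν.2 a)] at h
  exact hab (top_le_iff.mp h)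

end IsProperPV

namespace IsLocalizing

variable {A : Type*} [CommRing A] {ν : A → EReal} {f g : A}

theorem map_ne_top (hν : IsPseudovaluation ν) (hf : IsLocalizing ν f) : ν f ≠ ⊤ := by
  obtain ⟨C, D, -, -, h⟩ := hf
  have h₁ := h 1 1
  simp only [pow_one, mul_one, hν.map_one, mul_zero, zero_add, Nat.cast_one, one_mul] at h₁
  exact ne_top_of_le_ne_top (EReal.coe_ne_top D) h₁

theorem of_mul_left (hν : IsProperPV ν) (hfg : IsLocalizing ν (f * g)) : IsLocalizing ν f := by
  have hg_top : ν g ≠ ⊤ := hν.map_ne_top_of_mul (hfg.map_ne_top hν.1)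
  obtain ⟨r, hr⟩ : ∃ r : ℝ, ν g = r := ⟨(ν g).toReal, (EReal.coe_toReal hg_top (hν.2 g)).symm⟩
  obtain ⟨C, D, hC, hD, h⟩ := hfg
  refine ⟨C, D + |r|, hC, by positivity, fun n x => ?_⟩
  have hgn : ((n * r : ℝ) : EReal) ≤ ν (g ^ n) := by
    simpa [hr, ← EReal.coe_nsmul] using hν.nsmul_le_map_pow g n
  refine (EReal.addLECancellable_coe (n * r)).add_le_add_iff_left.mp ?_
  calc ((n * r : ℝ) : EReal) + ν (f ^ n * x) ≤ ν (g ^ n) + ν (f ^ n * x) :=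
        add_le_add_left hgn _
    _ ≤ ν (g ^ n * (f ^ n * x)) := hν.1.add_le_mul _ _ (hν.2 _) (hν.2 _)
    _ = ν ((f * g) ^ n * x) := by ring_nf
    _ ≤ C * ν x + ((n * D : ℝ) : EReal) := h n x
    _ ≤ C * ν x + ((n * r + n * (D + |r|) : ℝ) : EReal) := by
      gcongr
      nlinarith [neg_abs_le r, n.cast_nonneg (α := ℝ)]
    _ = ((n * r : ℝ) : EReal) + (C * ν x + ((n * (D + |r|) : ℝ) : EReal)) := by
      rw [EReal.coe_add, add_left_comm]

theorem of_mul_right (hν : IsProperPV ν) (hfg : IsLocalizing ν (f * g)) : IsLocalizing ν g :=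
  (mul_comm f g ▸ hfg).of_mul_left hν

theorem mul (hf : IsLocalizing ν f) (hg : IsLocalizing ν g) : IsLocalizing ν (f * g) := by
  obtain ⟨Cf, Df, hCf, hDf, hf⟩ := hf
  obtain ⟨Cg, Dg, hCg, hDg, hg⟩ := hg
  refine ⟨Cf * Cg, Cf * Dg + Df, by positivity, by positivity, fun n x => ?_⟩
  calc ν ((f * g) ^ n * x) = ν (f ^ n * (g ^ n * x)) := by rw [mul_pow, mul_assoc]
    _ ≤ Cf * ν (g ^ n * x) + ((n * Df : ℝ) : EReal) := hf n _
    _ ≤ Cf * (Cg * ν x + ((n * Dg : ℝ) : EReal)) + ((n * Df : ℝ) : EReal) := by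
      gcongr
      exact hg n x
    _ = ((Cf * Cg : ℝ) : EReal) * ν x + ((n * (Cf * Dg + Df) : ℝ) : EReal) := by
      rw [EReal.left_distrib_of_nonneg_of_ne_top (EReal.coe_nonneg.mpr hCf.le)
        (EReal.coe_ne_top _), ← mul_assoc, add_assoc, ← EReal.coe_mul, ← EReal.coe_mul,
        ← EReal.coe_add]
      congr 2
      ring

end IsLocalizing

theorem statement6_general (A : Type*) [CommRing A]
    (ν : A → EReal) (hν : IsNegativePV ν)
    (f g : A) :
    IsLocalizing ν (f * g) ↔ (IsLocalizing ν f ∧ IsLocalizing ν g) := by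
  have hproper : IsProperPV ν := ⟨hν.1, hν.2.1⟩
  exact ⟨fun h => ⟨h.of_mul_left hproper, h.of_mul_right hproper⟩, fun ⟨hf, hg⟩ => hf.mul hg⟩

/-- For non-zero divisors `f, g`, the product `f g` is localizing iff
both `f` and `g` are localizing. -/
theorem statement6 (A : Type*) [CommRing A]
    (ν : A → EReal) (hν : IsNegativePV ν)
    (f g : A) (hf : f ∈ nonZeroDivisors A) (hg : g ∈ nonZeroDivisors A) :
    IsLocalizing ν (f * g) ↔ (IsLocalizing ν f ∧ IsLocalizing ν g) :=
  statement6_general A ν hν f g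
end
end

section
/- Let (A, ν) be an integral domain with a negative pseudovaluation and let f ∈ A be a nonzero localizing element, with constants C > 0 and D ≥ 0 as in the localizing condition. Let d ≥ D with d > 0, and let ν' be the induced pseudovaluation on A_f. Every z ∈ A_f has a unique representation z = a/f^m with a ∈ A and m ≥ 0 minimal (equivalently, m = 0 or f does not divide a); set σ(z) = ν(a) − m·d. Then there exists a real constant E > 0 such that ν'(z) ≥ σ(z) ≥ E·ν'(z) for all z ∈ A_f. In particular, the restriction of ν' to A is linearly equivalent to ν. -/
open scoped Classical

noncomputable section

/-!
Write `z = a / f ^ m` with `m` minimal and let `z = Σ_{l ≤ N} g_l f⁻ˡ` be any representation,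
of weight `μ = min_l (ν(g_l) - l d)`. Clearing denominators, `b = Σ_l g_l f^{N-l}` equals
`f^{N-m} a`, where `m ≤ N` by minimality of `m`. On the one hand `ν(b) ≥ μ + N ν(f)`; on the
other hand the localizing inequality gives `ν(b) ≤ C ν(a) + (N - m) D`. Since the leading
coefficient of `g` is nonzero, `μ + N d ≤ 0`, which bounds `N` by `-μ / d`, and these inequalities
combine to `E μ ≤ ν(a) - m d` for a constant `E` depending only on `C`, `D`, `d` and `ν(f)`.
Taking the supremum over all representations gives `E ν'(z) ≤ ν(a) - m d`; the other inequality
comes from the representation `z = a f⁻ᵐ` itself.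
-/

open scoped Polynomial

namespace EReal

lemma coe_mul_iSup_le {ι : Sort*} {c : ℝ} (hc : 0 < c) {h : ι → EReal} {y : EReal}
    (H : ∀ i, (c : EReal) * h i ≤ y) : (c : EReal) * ⨆ i, h i ≤ y := by
  have hc' : (0 : EReal) < c := by exact_mod_cast hc
  rw [mul_comm, ← EReal.le_div_iff_mul_le hc' (coe_ne_top c)]
  exact iSup_le fun i => (EReal.le_div_iff_mul_le hc' (coe_ne_top c)).2 (mul_comm (h i) c ▸ H i)

end EReal

namespace IsPseudovaluation

variable {A : Type*} [CommRing A] {ν : A → EReal}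

lemma le_map_neg (h : IsPseudovaluation ν) (a : A) : ν a ≤ ν (-a) := by
  simpa [h.map_zero] using h.min_le_sub 0 a

lemma min_le_map_add (h : IsPseudovaluation ν) (a b : A) : min (ν a) (ν b) ≤ ν (a + b) := by
  simpa using (min_le_min_left _ (h.le_map_neg b)).trans (h.min_le_sub a (-b))

lemma le_map_sum (h : IsPseudovaluation ν) {ι : Type*} (s : Finset ι) (c : ι → A) {x : EReal}
    (hx : ∀ i ∈ s, x ≤ ν (c i)) : x ≤ ν (∑ i ∈ s, c i) :=
  Finset.sum_induction c (fun y => x ≤ ν y)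
    (fun a b ha hb => (le_min ha hb).trans (h.min_le_map_add a b)) (by simp [h.map_zero]) hx

lemma natCast_mul_le_map_pow (h : IsPseudovaluation ν) (hbot : ∀ a, ν a ≠ ⊥) {f : A} {v : ℝ}
    (hv : (v : EReal) ≤ ν f) (k : ℕ) : (((k : ℝ) * v : ℝ) : EReal) ≤ ν (f ^ k) := by
  induction k with
  | zero => simp [h.map_one]
  | succ k ih =>
    calc ((((k + 1 : ℕ) : ℝ) * v : ℝ) : EReal) = (((k : ℝ) * v : ℝ) : EReal) + v := by
          rw [← EReal.coe_add]; congr 1; push_cast; ring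
      _ ≤ ν (f ^ k) + ν f := add_le_add ih hv
      _ ≤ ν (f ^ (k + 1)) := pow_succ f k ▸ h.add_le_mul _ _ (hbot _) (hbot _)

end IsPseudovaluation

lemma IsProperPV.exists_coe_nonpos_le {A : Type*} [CommRing A] {ν : A → EReal}
    (hν : IsProperPV ν) (a : A) : ∃ r : ℝ, r ≤ 0 ∧ (r : EReal) ≤ ν a := by
  induction hνa : ν a with
  | bot => exact absurd hνa (hν.2 a)
  | coe r => exact ⟨min r 0, min_le_right r 0, by exact_mod_cast min_le_left r 0⟩
  | top => exact ⟨0, le_rfl, le_top⟩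

lemma LinearlyEquivalent.of_le_of_mul_le {A : Type*} {ν₁ ν₂ : A → EReal} {E : ℝ} (hE : 0 < E)
    (h₁ : ∀ a, ν₂ a ≤ ν₁ a) (h₂ : ∀ a, (E : EReal) * ν₁ a ≤ ν₂ a) : LinearlyEquivalent ν₁ ν₂ :=
  ⟨E, 1, 0, 0, hE, one_pos, le_rfl, le_rfl, fun a => by simpa using h₁ a,
    fun a => by simpa using h₂ a⟩

section PolyPV

variable {A : Type*} [CommRing A] (ν : A → EReal) (d : ℝ)

lemma polyPV_le (g : A[X]) (i : ℕ) : polyPV ν d g ≤ ν (g.coeff i) - (((i : ℝ) * d : ℝ) : EReal) :=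
  iInf_le _ i

lemma sub_le_polyPV_monomial {ν} (h0 : ν 0 = ⊤) (m : ℕ) (a : A) :
    ν a - (((m : ℝ) * d : ℝ) : EReal) ≤ polyPV ν d (Polynomial.monomial m a) := by
  refine le_iInf fun i => ?_
  rcases eq_or_ne m i with rfl | hmi
  · simp
  · rw [Polynomial.coeff_monomial, if_neg hmi, h0, EReal.top_sub_coe]
    exact le_top

lemma polyPV_le_neg_natDegree_mul {ν} (hneg : ∀ a : A, a ≠ 0 → ν a ≤ 0) {g : A[X]} (hg : g ≠ 0) :
    polyPV ν d g ≤ ((-(g.natDegree * d) : ℝ) : EReal) :=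
  calc polyPV ν d g ≤ ν g.leadingCoeff - ((g.natDegree * d : ℝ) : EReal) := polyPV_le ν d g _
    _ ≤ 0 - ((g.natDegree * d : ℝ) : EReal) :=
      EReal.sub_le_sub (hneg _ (Polynomial.leadingCoeff_ne_zero.2 hg)) le_rfl
    _ = ((-(g.natDegree * d) : ℝ) : EReal) := by rw [zero_sub, EReal.coe_neg]

end PolyPV

section Localization

variable {A : Type*} [CommRing A] (f : A)

/-- `a / f ^ m` represents `z` in `A_f`. -/
def IsAwayRepr (z : Localization.Away f) (a : A) (m : ℕ) : Prop :=
  algebraMap A (Localization.Away f) a = algebraMap A (Localization.Away f) (f ^ m) * z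

variable {f}

lemma le_of_isAwayRepr_minimal {z : Localization.Away f} {m n : ℕ} {b : A}
    (hmin : ∀ m' < m, ¬∃ a', IsAwayRepr f z a' m') (hb : IsAwayRepr f z b n) : m ≤ n :=
  not_lt.1 fun hn => hmin n hn ⟨b, hb⟩

theorem existsUnique_isAwayRepr_minimal (hf : f ∈ nonZeroDivisors A) (z : Localization.Away f) :
    ∃! q : A × ℕ, IsAwayRepr f z q.1 q.2 ∧ ∀ m' < q.2, ¬∃ a', IsAwayRepr f z a' m' := by
  have hex : ∃ m a, IsAwayRepr f z a m := by
    obtain ⟨n, a, h⟩ := IsLocalization.Away.surj f z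
    exact ⟨n, a, by rw [IsAwayRepr, map_pow, ← h, mul_comm]⟩
  obtain ⟨a, ha⟩ := Nat.find_spec hex
  refine ⟨(a, Nat.find hex), ⟨ha, fun m' h => Nat.find_min hex h⟩, ?_⟩
  rintro ⟨a', m'⟩ ⟨h', hmin'⟩
  obtain rfl : m' = Nat.find hex :=
    le_antisymm (le_of_isAwayRepr_minimal hmin' ha) (Nat.find_min' hex ⟨a', h'⟩)
  have hinj := IsLocalization.injective (Localization.Away f) (Submonoid.powers_le.2 hf)
  exact Prod.ext (hinj (h'.trans ha.symm)) rfl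

lemma aeval_invSelf_monomial {z : Localization.Away f} {a : A} {m : ℕ}
    (h : IsAwayRepr f z a m) :
    Polynomial.aeval (IsLocalization.Away.invSelf (S := Localization.Away f) f)
      (Polynomial.monomial m a) = z := by
  have hpow : (algebraMap A (Localization.Away f) f
      * IsLocalization.Away.invSelf (S := Localization.Away f) f) ^ m = 1 := by
    rw [IsLocalization.Away.mul_invSelf, one_pow]
  rw [IsAwayRepr, map_pow] at h
  rw [Polynomial.aeval_monomial]
  linear_combination (IsLocalization.Away.invSelf (S := Localization.Away f) f) ^ m * h + z * hpow

lemma isAwayRepr_sum_coeff_mul_pow_sub {g : A[X]} {N : ℕ} (hN : g.natDegree ≤ N) :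
    IsAwayRepr f (Polynomial.aeval (IsLocalization.Away.invSelf (S := Localization.Away f) f) g)
      (∑ l ∈ Finset.range (N + 1), g.coeff l * f ^ (N - l)) N := by
  rw [IsAwayRepr, Polynomial.aeval_eq_sum_range' (Nat.lt_succ_of_le hN), map_sum, Finset.mul_sum]
  refine Finset.sum_congr rfl fun l hl => ?_
  obtain ⟨k, rfl⟩ := Nat.exists_eq_add_of_le (Nat.lt_succ_iff.1 (Finset.mem_range.1 hl))
  have hpow : (algebraMap A (Localization.Away f) f
      * IsLocalization.Away.invSelf (S := Localization.Away f) f) ^ l = 1 := by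
    rw [IsLocalization.Away.mul_invSelf, one_pow]
  rw [Nat.add_sub_cancel_left, Algebra.smul_def, map_mul, map_pow, map_pow]
  linear_combination -(algebraMap A (Localization.Away f) (g.coeff l)
    * algebraMap A (Localization.Away f) f ^ k) * hpow

lemma sub_le_locPV {ν : A → EReal} (h0 : ν 0 = ⊤) (d : ℝ) {z : Localization.Away f} {a : A}
    {m : ℕ} (h : IsAwayRepr f z a m) : ν a - (((m : ℝ) * d : ℝ) : EReal) ≤ locPV ν f d z :=
  (sub_le_polyPV_monomial d h0 m a).trans
    (le_iSup₂_of_le (Polynomial.monomial m a) (aeval_invSelf_monomial h) le_rfl)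

end Localization

lemma IsPseudovaluation.add_natCast_mul_le_map_sum {A : Type*} [CommRing A] {ν : A → EReal}
    (h : IsPseudovaluation ν) (hbot : ∀ a, ν a ≠ ⊥) {f : A} {v d mu : ℝ}
    (hv : (v : EReal) ≤ ν f) (hvd : v ≤ d) {g : A[X]} (hmu : (mu : EReal) ≤ polyPV ν d g)
    (N : ℕ) :
    ((mu + N * v : ℝ) : EReal) ≤ ν (∑ l ∈ Finset.range (N + 1), g.coeff l * f ^ (N - l)) := by
  refine h.le_map_sum _ _ fun l hl => ?_
  have hlN : l ≤ N := Nat.lt_succ_iff.1 (Finset.mem_range.1 hl)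
  have hcoeff : ((mu + l * d : ℝ) : EReal) ≤ ν (g.coeff l) := by
    rw [EReal.coe_add]
    exact (EReal.le_sub_iff_add_le (.inl (EReal.coe_ne_bot _)) (.inl (EReal.coe_ne_top _))).1
      (hmu.trans (polyPV_le ν d g l))
  calc ((mu + N * v : ℝ) : EReal)
      ≤ ((mu + l * d : ℝ) : EReal) + ((((N - l : ℕ) : ℝ) * v : ℝ) : EReal) := by
        rw [← EReal.coe_add, EReal.coe_le_coe_iff, Nat.cast_sub hlN]
        nlinarith [mul_le_mul_of_nonneg_left hvd (Nat.cast_nonneg (α := ℝ) l)]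
    _ ≤ ν (g.coeff l) + ν (f ^ (N - l)) := add_le_add hcoeff (h.natCast_mul_le_map_pow hbot hv _)
    _ ≤ ν (g.coeff l * f ^ (N - l)) := h.add_le_mul _ _ (hbot _) (hbot _)

/-- The constant `E`, for a lower bound `v` of `ν f`. -/
def locConst (C D d v : ℝ) : ℝ := 1 + 1 / C + (D - v) / (d * C)

lemma locConst_pos {C D d v : ℝ} (hC : 0 < C) (hd : 0 < d) (hvD : v ≤ D) :
    0 < locConst C D d v := by
  have h₁ : 0 < 1 / C := by positivity
  have h₂ : 0 ≤ (D - v) / (d * C) := div_nonneg (by linarith) (by positivity)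
  unfold locConst
  linarith

lemma locConst_mul_le {C D d v mu ar : ℝ} {N m : ℕ} (hC : 0 < C) (hD : 0 ≤ D) (hd : 0 < d)
    (hvD : v ≤ D) (hmN : m ≤ N) (hloc : mu + N * v ≤ C * ar + (N - m) * D)
    (hlead : mu + N * d ≤ 0) :
    locConst C D d v * mu ≤ ar - m * d := by
  have hmN' : (m : ℝ) ≤ N := by exact_mod_cast hmN
  rw [← mul_le_mul_iff_right₀ (mul_pos hC hd)]
  have expand : C * d * (locConst C D d v * mu) = (C * d + d + (D - v)) * mu := by
    unfold locConst; field_simp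
  rw [expand]
  -- `hlead` gives `N ≤ -mu / d`, so `N (v - D) ≥ mu (D - v) / d`; also `m d ≤ N d ≤ -mu`.
  nlinarith [mul_nonneg (by linarith : (0:ℝ) ≤ -mu - N * d) (by linarith : (0:ℝ) ≤ D - v),
    mul_nonneg (mul_nonneg hC.le hd.le) (by linarith : (0:ℝ) ≤ -mu - N * d),
    mul_le_mul_of_nonneg_left hloc hd.le,
    mul_nonneg (mul_nonneg hC.le hd.le) (mul_nonneg (by linarith : (0:ℝ) ≤ N - m) hd.le),
    mul_nonneg (mul_nonneg hd.le hD) (Nat.cast_nonneg m : (0:ℝ) ≤ m)]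

section UpperBound

variable {A : Type*} [CommRing A] {ν : A → EReal} {f : A} {z : Localization.Away f} {a : A}
  {m : ℕ} {g : A[X]}

lemma le_natDegree_of_minimal (hmin : ∀ m' < m, ¬∃ a', IsAwayRepr f z a' m')
    (hg : Polynomial.aeval (IsLocalization.Away.invSelf (S := Localization.Away f) f) g = z) :
    m ≤ g.natDegree :=
  le_of_isAwayRepr_minimal hmin (hg ▸ isAwayRepr_sum_coeff_mul_pow_sub le_rfl)

lemma pow_sub_mul_eq_sum_of_minimal (hf : f ∈ nonZeroDivisors A) (hrepr : IsAwayRepr f z a m)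
    (hmin : ∀ m' < m, ¬∃ a', IsAwayRepr f z a' m')
    (hg : Polynomial.aeval (IsLocalization.Away.invSelf (S := Localization.Away f) f) g = z) :
    f ^ (g.natDegree - m) * a
      = ∑ l ∈ Finset.range (g.natDegree + 1), g.coeff l * f ^ (g.natDegree - l) := by
  have hb := hg ▸ isAwayRepr_sum_coeff_mul_pow_sub (f := f) (le_refl g.natDegree)
  unfold IsAwayRepr at hrepr hb
  refine IsLocalization.injective (Localization.Away f) (Submonoid.powers_le.2 hf) ?_
  rw [map_mul, hrepr, ← mul_assoc, ← map_mul, ← pow_add,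
    Nat.sub_add_cancel (le_natDegree_of_minimal hmin hg), hb]

lemma locConst_mul_polyPV_le (hν : IsNegativePV ν) (hf : f ∈ nonZeroDivisors A) {C D d v : ℝ}
    (hC : 0 < C) (hD : 0 ≤ D)
    (hloc : ∀ (n : ℕ) (x : A), ν (f ^ n * x) ≤ (C : EReal) * ν x + (((n : ℝ) * D : ℝ) : EReal))
    (hd : 0 < d) (hv : (v : EReal) ≤ ν f) (hv0 : v ≤ 0)
    (hrepr : IsAwayRepr f z a m) (hmin : ∀ m' < m, ¬∃ a', IsAwayRepr f z a' m')
    (hg : Polynomial.aeval (IsLocalization.Away.invSelf (S := Localization.Away f) f) g = z) :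
    (locConst C D d v : EReal) * polyPV ν d g ≤ ν a - (((m : ℝ) * d : ℝ) : EReal) := by
  obtain ⟨hpv, hbot, hneg⟩ := hν
  rcases eq_or_ne g 0 with rfl | hg0
  · have ha : a = 0 := IsLocalization.injective (Localization.Away f) (Submonoid.powers_le.2 hf)
      (by rw [hrepr, ← hg, map_zero, map_zero, mul_zero])
    rw [ha, hpv.map_zero, EReal.top_sub_coe]
    exact le_top
  have hmN := le_natDegree_of_minimal hmin hg
  have hlead := polyPV_le_neg_natDegree_mul d hneg hg0
  induction hp : polyPV ν d g with
  | bot => rw [EReal.coe_mul_bot_of_pos (locConst_pos hC hd (by linarith))]; exact bot_le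
  | top => exact absurd (hp ▸ hlead) (not_le.2 (EReal.coe_lt_top _))
  | coe mu =>
    induction hνa : ν a with
    | bot => exact absurd hνa (hbot a)
    | top => rw [EReal.top_sub_coe]; exact le_top
    | coe ar =>
      have hnum := hpv.add_natCast_mul_le_map_sum hbot hv (hv0.trans hd.le) hp.ge g.natDegree
      rw [← pow_sub_mul_eq_sum_of_minimal hf hrepr hmin hg] at hnum
      have h₁ := hnum.trans (hloc _ a)
      rw [hνa, ← EReal.coe_mul, ← EReal.coe_add, EReal.coe_le_coe_iff, Nat.cast_sub hmN] at h₁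
      rw [hp, EReal.coe_le_coe_iff] at hlead
      rw [← EReal.coe_mul, ← EReal.coe_sub, EReal.coe_le_coe_iff]
      exact locConst_mul_le hC hD hd (by linarith) hmN h₁ (by linarith)

lemma locConst_mul_locPV_le (hν : IsNegativePV ν) (hf : f ∈ nonZeroDivisors A) {C D d v : ℝ}
    (hC : 0 < C) (hD : 0 ≤ D)
    (hloc : ∀ (n : ℕ) (x : A), ν (f ^ n * x) ≤ (C : EReal) * ν x + (((n : ℝ) * D : ℝ) : EReal))
    (hd : 0 < d) (hv : (v : EReal) ≤ ν f) (hv0 : v ≤ 0)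
    (hrepr : IsAwayRepr f z a m) (hmin : ∀ m' < m, ¬∃ a', IsAwayRepr f z a' m') :
    (locConst C D d v : EReal) * locPV ν f d z ≤ ν a - (((m : ℝ) * d : ℝ) : EReal) :=
  have hE := locConst_pos hC hd (show v ≤ D by linarith)
  EReal.coe_mul_iSup_le hE fun g => EReal.coe_mul_iSup_le hE fun hg =>
    locConst_mul_polyPV_le hν hf hC hD hloc hd hv hv0 hrepr hmin hg

end UpperBound

theorem statement8_general (A : Type*) [CommRing A] [IsDomain A]
    (ν : A → EReal) (hν : IsNegativePV ν)
    (f : A) (hf0 : f ≠ 0)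
    (C D : ℝ) (hC : 0 < C) (hD : 0 ≤ D)
    (hloc : ∀ (n : ℕ) (x : A),
      ν (f ^ n * x) ≤ (C : EReal) * ν x + (((n : ℝ) * D : ℝ) : EReal))
    (d : ℝ) (hd : 0 < d) :
    (∀ z : Localization.Away f, ∃! q : A × ℕ,
      algebraMap A (Localization.Away f) q.1
        = algebraMap A (Localization.Away f) (f ^ q.2) * z ∧
      ∀ m' < q.2, ¬∃ a' : A, algebraMap A (Localization.Away f) a'
        = algebraMap A (Localization.Away f) (f ^ m') * z) ∧
    (∃ E : ℝ, 0 < E ∧ ∀ (z : Localization.Away f) (a : A) (m : ℕ),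
      algebraMap A (Localization.Away f) a
        = algebraMap A (Localization.Away f) (f ^ m) * z →
      (∀ m' < m, ¬∃ a' : A, algebraMap A (Localization.Away f) a'
        = algebraMap A (Localization.Away f) (f ^ m') * z) →
      (ν a - (((m : ℝ) * d : ℝ) : EReal) ≤ locPV ν f d z ∧
       (E : EReal) * locPV ν f d z ≤ ν a - (((m : ℝ) * d : ℝ) : EReal))) ∧
    LinearlyEquivalent (fun a : A => locPV ν f d (algebraMap A (Localization.Away f) a)) ν := by
  have hf : f ∈ nonZeroDivisors A := mem_nonZeroDivisors_of_ne_zero hf0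
  obtain ⟨v, hv0, hv⟩ := IsProperPV.exists_coe_nonpos_le ⟨hν.1, hν.2.1⟩ f
  have hE := locConst_pos hC hd (show v ≤ D by linarith)
  have hbounds : ∀ (z : Localization.Away f) (a : A) (m : ℕ), IsAwayRepr f z a m →
      (∀ m' < m, ¬∃ a', IsAwayRepr f z a' m') →
      ν a - (((m : ℝ) * d : ℝ) : EReal) ≤ locPV ν f d z ∧
        (locConst C D d v : EReal) * locPV ν f d z ≤ ν a - (((m : ℝ) * d : ℝ) : EReal) :=
    fun z a m hrepr hmin => ⟨sub_le_locPV hν.1.map_zero d hrepr,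
      locConst_mul_locPV_le hν hf hC hD hloc hd hv hv0 hrepr hmin⟩
  have hconst : ∀ a : A, IsAwayRepr f (algebraMap A (Localization.Away f) a) a 0 := fun a => by
    rw [IsAwayRepr, pow_zero, map_one, one_mul]
  refine ⟨existsUnique_isAwayRepr_minimal hf, ⟨_, hE, hbounds⟩,
    LinearlyEquivalent.of_le_of_mul_le hE (fun a => ?_) (fun a => ?_)⟩
  · simpa using (hbounds _ a 0 (hconst a) fun m' h => absurd h m'.not_lt_zero).1
  · simpa using (hbounds _ a 0 (hconst a) fun m' h => absurd h m'.not_lt_zero).2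

/-- Let `f ≠ 0` be localizing with constants `C, D`, and `d ≥ D`, `d > 0`.
Every `z ∈ A_f` has a unique representation `z = a/f^m` with `m` minimal; setting
`σ(z) = ν(a) - m d`, there is `E > 0` with `ν'(z) ≥ σ(z) ≥ E ν'(z)`.  In particular the
restriction of `ν'` to `A` is linearly equivalent to `ν`. -/
theorem statement8 (A : Type*) [CommRing A] [IsDomain A]
    (ν : A → EReal) (hν : IsNegativePV ν)
    (f : A) (hf0 : f ≠ 0)
    (C D : ℝ) (hC : 0 < C) (hD : 0 ≤ D)
    (hloc : ∀ (n : ℕ) (x : A),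
      ν (f ^ n * x) ≤ (C : EReal) * ν x + (((n : ℝ) * D : ℝ) : EReal))
    (d : ℝ) (hd : 0 < d) (hdD : D ≤ d) :
    (∀ z : Localization.Away f, ∃! q : A × ℕ,
      algebraMap A (Localization.Away f) q.1
        = algebraMap A (Localization.Away f) (f ^ q.2) * z ∧
      ∀ m' < q.2, ¬∃ a' : A, algebraMap A (Localization.Away f) a'
        = algebraMap A (Localization.Away f) (f ^ m') * z) ∧
    (∃ E : ℝ, 0 < E ∧ ∀ (z : Localization.Away f) (a : A) (m : ℕ),
      algebraMap A (Localization.Away f) a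
        = algebraMap A (Localization.Away f) (f ^ m) * z →
      (∀ m' < m, ¬∃ a' : A, algebraMap A (Localization.Away f) a'
        = algebraMap A (Localization.Away f) (f ^ m') * z) →
      (ν a - (((m : ℝ) * d : ℝ) : EReal) ≤ locPV ν f d z ∧
       (E : EReal) * locPV ν f d z ≤ ν a - (((m : ℝ) * d : ℝ) : EReal))) ∧
    LinearlyEquivalent (fun a : A => locPV ν f d (algebraMap A (Localization.Away f) a)) ν :=
  statement8_general A ν hν f hf0 C D hC hD hloc d hd
end
end
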